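/- arXiv:2505.09444 — 8 statements merged into one kernel-verified Lean document; each statement's English description precedes it below -/
import Mathlib

section
/- The shifted moments property is preserved under equivalence of sequences: if M = (M_p) satisfies sm and L = (L_p) is a sequence of positive reals with L ≈ M (i.e., there exists C > 1 with C^{-p-1} L_p ≤ M_p ≤ C^{p+1} L_p for all p), then L also satisfies sm. -/
/-!
Passing to logarithms, `sm` bounds the second difference `ℓ (p+2) - 2 ℓ (p+1) + ℓ p` of
`ℓ = log M` by `C₀ H ^ (p+1)`, and `L ≈ M` says `|log L p - log M p| ≤ (p+1) log C`.
So the second differences of `log L` and `log M` differ by at most `(4p+8) log C`, a linear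
term that is absorbed into a geometric bound with ratio `max H 2`.
-/

open Real

lemma log_div_div_div {a b c : ℝ} (ha : a ≠ 0) (hb : b ≠ 0) (hc : c ≠ 0) :
    log ((a / b) / (b / c)) = log a - 2 * log b + log c := by
  rw [log_div (div_ne_zero ha hb) (div_ne_zero hb hc), log_div ha hb, log_div hb hc]
  ring

lemma abs_log_sub_log_le {x y K : ℝ} (hx : 0 < x) (hK : 0 < K)
    (hle : K⁻¹ * x ≤ y) (hge : y ≤ K * x) : |log x - log y| ≤ log K := by
  have hy : 0 < y := lt_of_lt_of_le (by positivity) hle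
  have hyx : log y ≤ log K + log x := by
    rw [← log_mul hK.ne' hx.ne']
    exact log_le_log hy hge
  have hxy : log x ≤ log K + log y := by
    rw [← log_mul hK.ne' hy.ne']
    exact log_le_log hx (by rwa [inv_mul_le_iff₀ hK] at hle)
  exact abs_sub_le_iff.mpr ⟨by linarith, by linarith⟩

lemma second_diff_le_of_abs_sub_le {f g : ℕ → ℝ} {c : ℝ}
    (h : ∀ k : ℕ, |f k - g k| ≤ (k + 1) * c) (p : ℕ) :
    f (p + 2) - 2 * f (p + 1) + f p ≤ g (p + 2) - 2 * g (p + 1) + g p + 4 * ((p + 2) * c) := by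
  have h0 := (abs_le.mp (h p)).2
  have h1 := (abs_le.mp (h (p + 1))).1
  have h2 := (abs_le.mp (h (p + 2))).2
  push_cast at h1 h2
  linarith

lemma nat_add_two_le_two_pow (p : ℕ) : (p : ℝ) + 2 ≤ 2 ^ (p + 1) := by
  exact_mod_cast Nat.lt_two_pow_self (n := p + 1)

lemma mul_pow_add_mul_pow_le {a b x y : ℝ} (ha : 0 ≤ a) (hb : 0 ≤ b) (hx : 0 ≤ x) (hy : 0 ≤ y)
    (n : ℕ) : a * x ^ n + b * y ^ n ≤ (a + b) * max x y ^ n := by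
  have hxn : x ^ n ≤ max x y ^ n := pow_le_pow_left₀ hx (le_max_left x y) n
  have hyn : y ^ n ≤ max x y ^ n := pow_le_pow_left₀ hy (le_max_right x y) n
  nlinarith [mul_le_mul_of_nonneg_left hxn ha, mul_le_mul_of_nonneg_left hyn hb]

theorem sm_stable_under_equivalence_general (M L : ℕ → ℝ)
    (hLpos : ∀ p, 0 < L p)
    (hsmM : ∃ C0 > (0:ℝ), ∃ H > (1:ℝ), ∀ p : ℕ,
      Real.log ((M (p+2) / M (p+1)) / (M (p+1) / M p)) ≤ C0 * H ^ (p+1))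
    (hequiv : ∃ C > (1:ℝ), ∀ p : ℕ,
      (C ^ (p+1))⁻¹ * L p ≤ M p ∧ M p ≤ C ^ (p+1) * L p) :
    ∃ C0 > (0:ℝ), ∃ H > (1:ℝ), ∀ p : ℕ,
      Real.log ((L (p+2) / L (p+1)) / (L (p+1) / L p)) ≤ C0 * H ^ (p+1) := by
  obtain ⟨C0, hC0, H, hH, hM⟩ := hsmM
  obtain ⟨C, hC, hE⟩ := hequiv
  have hlogC : 0 < log C := log_pos hC
  have hMpos (p : ℕ) : 0 < M p := lt_of_lt_of_le (by have := hLpos p; positivity) (hE p).1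
  have hlog (k : ℕ) : |log (L k) - log (M k)| ≤ (k + 1) * log C := by
    have := abs_log_sub_log_le (hLpos k) (by positivity) (hE k).1 (hE k).2
    rwa [log_pow, Nat.cast_succ] at this
  refine ⟨C0 + 4 * log C, by positivity, max H 2, hH.trans_le (le_max_left H 2), fun p => ?_⟩
  have hMp := hM p
  rw [log_div_div_div (hMpos _).ne' (hMpos _).ne' (hMpos _).ne'] at hMp
  rw [log_div_div_div (hLpos _).ne' (hLpos _).ne' (hLpos _).ne']
  calc log (L (p + 2)) - 2 * log (L (p + 1)) + log (L p)
      ≤ log (M (p + 2)) - 2 * log (M (p + 1)) + log (M p) + 4 * ((p + 2) * log C) :=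
        second_diff_le_of_abs_sub_le hlog p
    _ ≤ C0 * H ^ (p + 1) + 4 * log C * 2 ^ (p + 1) := by
        have := mul_le_mul_of_nonneg_right (nat_add_two_le_two_pow p) hlogC.le
        linarith
    _ ≤ (C0 + 4 * log C) * max H 2 ^ (p + 1) :=
        mul_pow_add_mul_pow_le hC0.le (by positivity) (by linarith) zero_le_two _

/-- The shifted moments property is preserved under equivalence of sequences. -/
theorem sm_stable_under_equivalence (M L : ℕ → ℝ)
    (hMpos : ∀ p, 0 < M p) (hLpos : ∀ p, 0 < L p)
    (hsmM : ∃ C0 > (0:ℝ), ∃ H > (1:ℝ), ∀ p : ℕ,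
      Real.log ((M (p+2) / M (p+1)) / (M (p+1) / M p)) ≤ C0 * H ^ (p+1))
    (hequiv : ∃ C > (1:ℝ), ∀ p : ℕ,
      (C ^ (p+1))⁻¹ * L p ≤ M p ∧ M p ≤ C ^ (p+1) * L p) :
    ∃ C0 > (0:ℝ), ∃ H > (1:ℝ), ∀ p : ℕ,
      Real.log ((L (p+2) / L (p+1)) / (L (p+1) / L p)) ≤ C0 * H ^ (p+1) :=
  sm_stable_under_equivalence_general M L hLpos hsmM hequiv
end

section
/- Let M = (M_p) be a sequence of positive reals with inf_p m_p > 0, where m_p = M_{p+1}/M_p. Then M satisfies sm if and only if there exist C_1 > 0 and H > 1 such that log(m_p) ≤ C_1 H^p for all p ∈ ℕ_0. -/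
/-- Under a positive lower bound on the quotients, the shifted moments condition is
equivalent to `log (m p) ≤ C₁ H ^ p`. -/
theorem sm_iff_log_quotient_bound (M : ℕ → ℝ) (hpos : ∀ p, 0 < M p)
    (hinf : ∃ a0 > (0:ℝ), ∀ p : ℕ, a0 ≤ M (p+1) / M p) :
    (∃ C0 > (0:ℝ), ∃ H > (1:ℝ), ∀ p : ℕ,
        Real.log ((M (p+2) / M (p+1)) / (M (p+1) / M p)) ≤ C0 * H ^ (p+1)) ↔
    (∃ C1 > (0:ℝ), ∃ H > (1:ℝ), ∀ p : ℕ,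
        Real.log (M (p+1) / M p) ≤ C1 * H ^ p) := by
  obtain ⟨a0, ha0, hq⟩ := hinf
  have hm : ∀ p, 0 < M (p+1) / M p := fun p => div_pos (hpos _) (hpos _)
  have hlog : ∀ p : ℕ, Real.log ((M (p+2) / M (p+1)) / (M (p+1) / M p))
      = Real.log (M (p+2) / M (p+1)) - Real.log (M (p+1) / M p) := fun p =>
    Real.log_div (ne_of_gt (hm (p+1))) (ne_of_gt (hm p))
  constructor
  · rintro ⟨C0, hC0, H, hH, h⟩
    set L : ℕ → ℝ := fun p => Real.log (M (p+1) / M p) with hL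
    have hstep : ∀ p, L (p+1) ≤ L p + C0 * H ^ (p+1) := by
      intro p
      have h2 := h p
      rw [hlog p] at h2
      simp only [hL]
      linarith
    have hH1 : (0:ℝ) < H - 1 := by linarith
    have key : ∀ p, L p ≤ L 0 + C0 * (H * (H ^ p - 1) / (H - 1)) := by
      intro p
      induction p with
      | zero => simp
      | succ n ih =>
        have h3 := hstep n
        calc L (n+1) ≤ L 0 + C0 * (H * (H ^ n - 1) / (H - 1)) + C0 * H ^ (n+1) := by
              linarith
          _ = L 0 + C0 * (H * (H ^ (n+1) - 1) / (H - 1)) := by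
              field_simp
              ring
    have hD : (0:ℝ) ≤ C0 * H / (H - 1) := by positivity
    refine ⟨|L 0| + C0 * H / (H - 1) + 1, by positivity, H, hH, fun p => ?_⟩
    have h1 : (1:ℝ) ≤ H ^ p := one_le_pow₀ (le_of_lt hH)
    have habs : L 0 ≤ |L 0| := le_abs_self _
    have habs0 : (0:ℝ) ≤ |L 0| := abs_nonneg _
    have heq : C0 * (H * (H ^ p - 1) / (H - 1))
        = C0 * H / (H - 1) * H ^ p - C0 * H / (H - 1) := by
      field_simp
    have hk := key p
    rw [heq] at hk
    nlinarith [hk, mul_le_mul_of_nonneg_left h1 habs0]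
  · rintro ⟨C1, hC1, H, hH, h⟩
    refine ⟨C1 + |Real.log a0| + 1, by positivity, H, hH, fun p => ?_⟩
    have h1 : (1:ℝ) ≤ H ^ (p+1) := one_le_pow₀ (le_of_lt hH)
    have hlb : Real.log a0 ≤ Real.log (M (p+1) / M p) :=
      Real.log_le_log ha0 (hq p)
    have habs : -|Real.log a0| ≤ Real.log a0 := neg_abs_le _
    have habs0 : (0:ℝ) ≤ |Real.log a0| := abs_nonneg _
    have h2 := h (p+1)
    rw [hlog p]
    nlinarith [mul_le_mul_of_nonneg_left h1 habs0, mul_le_mul_of_nonneg_left h1 (le_of_lt hC1)]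
end

section
/- The weight sequence M with M_0 = 1 and M_p = q^{p^p} for p ≥ 1 (q > 1 fixed) does not satisfy the shifted moments property: there exist no constants C_0 > 0, H > 1 such that log(m_{p+1}/m_p) ≤ C_0 H^{p+1} for all p, where m_p = M_{p+1}/M_p. -/
/-!
For `p ≥ 1` the quantity `log (m_{p+1} / m_p)` is the second difference
`((p+2)^(p+2) - 2 (p+1)^(p+1) + p^p) log q ≥ (p+1)^(p+1) log q`, and `n ^ n` outgrows every
geometric sequence `C₀ H ^ n`.
-/

open Filter Topology

theorem Real.log_div_div_pow_div_pow {q : ℝ} (hq : 0 < q) (a b c : ℕ) :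
    Real.log ((q ^ a / q ^ b) / (q ^ b / q ^ c)) = ((a : ℝ) - 2 * b + c) * Real.log q := by
  rw [Real.log_div (by positivity) (by positivity), Real.log_div (by positivity) (by positivity),
    Real.log_div (by positivity) (by positivity), Real.log_pow, Real.log_pow, Real.log_pow]
  ring

theorem Nat.three_mul_pow_self_le {n : ℕ} (hn : 2 ≤ n) : 3 * n ^ n ≤ (n + 1) ^ (n + 1) :=
  calc 3 * n ^ n ≤ (n + 1) * (n + 1) ^ n := by
        gcongr <;> omega
    _ = (n + 1) ^ (n + 1) := (_root_.pow_succ' _ _).symm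

theorem pow_self_le_second_diff {p : ℕ} (hp : 1 ≤ p) :
    ((p + 1 : ℕ) : ℝ) ^ (p + 1) ≤
      ((p + 2 : ℕ) : ℝ) ^ (p + 2) - 2 * ((p + 1 : ℕ) : ℝ) ^ (p + 1) + (p : ℝ) ^ p := by
  have h3 : 3 * ((p + 1 : ℕ) : ℝ) ^ (p + 1) ≤ ((p + 2 : ℕ) : ℝ) ^ (p + 2) := by
    exact_mod_cast Nat.three_mul_pow_self_le (n := p + 1) (by omega)
  have : (0 : ℝ) ≤ (p : ℝ) ^ p := by positivity
  linarith

theorem tendsto_pow_div_pow_self (H : ℝ) :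
    Tendsto (fun n : ℕ => H ^ n / (n : ℝ) ^ n) atTop (𝓝 0) := by
  refine squeeze_zero_norm' ?_ (FloorSemiring.tendsto_pow_div_factorial_atTop |H|)
  refine Eventually.of_forall fun n => ?_
  rw [norm_div, norm_pow, norm_pow, Real.norm_eq_abs, Real.norm_natCast]
  gcongr
  exact_mod_cast Nat.factorial_le_pow n

theorem qpowpp_not_sm_general (q : ℝ) (hq : 1 < q) (M : ℕ → ℝ)
    (hM : ∀ p : ℕ, 1 ≤ p → M p = q ^ (p ^ p)) :
    ¬ ∃ C0 > (0:ℝ), ∃ H > (1:ℝ), ∀ p : ℕ,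
        Real.log ((M (p+2) / M (p+1)) / (M (p+1) / M p)) ≤ C0 * H ^ (p+1) := by
  rintro ⟨C0, hC0, H, -, hsm⟩
  have hlogq : 0 < Real.log q := Real.log_pos hq
  have hratio := (tendsto_pow_div_pow_self H).comp (tendsto_add_atTop_nat 1)
  obtain ⟨p, hsmall, hp⟩ :=
    ((hratio.eventually (gt_mem_nhds (div_pos hlogq hC0))).and (eventually_ge_atTop 1)).exists
  have hgeom : C0 * H ^ (p + 1) < Real.log q * ((p + 1 : ℕ) : ℝ) ^ (p + 1) := by
    rw [Function.comp_apply, div_lt_div_iff₀ (by positivity) hC0] at hsmall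
    linarith
  have hsm_p := hsm p
  rw [hM p hp, hM (p + 1) (by omega), hM (p + 2) (by omega),
    Real.log_div_div_pow_div_pow (by linarith)] at hsm_p
  have hdiff := mul_le_mul_of_nonneg_right (pow_self_le_second_diff hp) hlogq.le
  push_cast at hsm_p hdiff hgeom
  linarith

/-- The weight sequence `M 0 = 1`, `M p = q ^ (p ^ p)` for `p ≥ 1` (with `q > 1`)
does not satisfy the shifted moments property. -/
theorem qpowpp_not_sm (q : ℝ) (hq : 1 < q) (M : ℕ → ℝ) (hM0 : M 0 = 1)
    (hM : ∀ p : ℕ, 1 ≤ p → M p = q ^ (p ^ p)) :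
    ¬ ∃ C0 > (0:ℝ), ∃ H > (1:ℝ), ∀ p : ℕ,
        Real.log ((M (p+2) / M (p+1)) / (M (p+1) / M p)) ≤ C0 * H ^ (p+1) :=
  qpowpp_not_sm_general q hq M hM
end

section
/- For q > 1 and α > 2, the sequence M_p = q^{p^α} satisfies sm but does not satisfy dc. -/
/-- For `q > 1` and `α > 2`, the sequence `M p = q ^ (p ^ α)` satisfies the shifted
moments property but is not derivation closed. -/
theorem qpow_alpha_sm_not_dc (q α : ℝ) (hq : 1 < q) (hα : 2 < α)
    (M : ℕ → ℝ) (hM : ∀ p : ℕ, M p = q ^ ((p : ℝ) ^ α)) :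
    (∃ C0 > (0:ℝ), ∃ H > (1:ℝ), ∀ p : ℕ,
        Real.log ((M (p+2) / M (p+1)) / (M (p+1) / M p)) ≤ C0 * H ^ (p+1)) ∧
    ¬ (∃ C0 > (0:ℝ), ∃ H > (1:ℝ), ∀ p : ℕ,
        M (p+1) / M p ≤ C0 * H ^ (p+1)) := by
  have hq0 : (0:ℝ) < q := lt_trans one_pos hq
  have hlq : 0 < Real.log q := Real.log_pos hq
  have hα0 : (0:ℝ) < α := by linarith
  constructor
  · refine ⟨Real.log q, hlq, Real.exp α, ?_, ?_⟩
    · rw [show (1:ℝ) = Real.exp 0 by simp]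
      exact Real.exp_lt_exp.mpr hα0
    intro p
    have key : M (p+2) / M (p+1) / (M (p+1) / M p)
        = q ^ ((((p:ℝ)+2)^α - ((p:ℝ)+1)^α) - (((p:ℝ)+1)^α - (p:ℝ)^α)) := by
      rw [hM, hM, hM]
      push_cast
      rw [← Real.rpow_sub hq0, ← Real.rpow_sub hq0, ← Real.rpow_sub hq0]
    rw [key, Real.log_rpow hq0]
    have h2 : (p:ℝ)^α ≤ ((p:ℝ)+1)^α :=
      Real.rpow_le_rpow (by positivity) (by linarith) hα0.le
    have h3 : (0:ℝ) ≤ ((p:ℝ)+1)^α := by positivity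
    have h1 : ((p:ℝ)+2)^α - ((p:ℝ)+1)^α - (((p:ℝ)+1)^α - (p:ℝ)^α) ≤ ((p:ℝ)+2)^α := by
      linarith
    have h4 : ((p:ℝ)+2)^α ≤ Real.exp α ^ (p+1) := by
      have h5 : ((p:ℝ)+2) ≤ Real.exp ((p:ℝ)+1) := by
        have := Real.add_one_le_exp ((p:ℝ)+1)
        linarith
      calc ((p:ℝ)+2)^α ≤ (Real.exp ((p:ℝ)+1))^α :=
            Real.rpow_le_rpow (by positivity) h5 hα0.le
        _ = Real.exp (((p:ℝ)+1) * α) := by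
            rw [← Real.exp_mul]
        _ = Real.exp (α * ((p:ℝ)+1)) := by ring_nf
        _ = Real.exp α ^ (p+1) := by
            rw [← Real.exp_nat_mul]
            norm_num
            ring_nf
      -- end
    calc (((p:ℝ)+2)^α - ((p:ℝ)+1)^α - (((p:ℝ)+1)^α - (p:ℝ)^α)) * Real.log q
        ≤ Real.exp α ^ (p+1) * Real.log q := by
          exact mul_le_mul_of_nonneg_right (le_trans h1 h4) hlq.le
      _ = Real.log q * Real.exp α ^ (p+1) := by ring
  · rintro ⟨C0, hC0, H, hH, h⟩
    have hlH : 0 < Real.log H := Real.log_pos hH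
    set c : ℝ := (|Real.log C0| + Real.log H) / Real.log q with hc
    -- find p with ((p:ℝ)+1)^(α-2) > c
    have htend : Filter.Tendsto (fun n : ℕ => ((n:ℝ)+1) ^ (α - 2)) Filter.atTop Filter.atTop := by
      apply (tendsto_rpow_atTop (by linarith : (0:ℝ) < α - 2)).comp
      exact Filter.tendsto_atTop_add_const_right _ 1 tendsto_natCast_atTop_atTop
    obtain ⟨p, hp⟩ := (htend.eventually_gt_atTop c).exists
    -- from hypothesis at p
    have hMp := h p
    rw [hM, hM] at hMp
    have hcast : ((p+1 : ℕ) : ℝ) = (p:ℝ) + 1 := by push_cast; ring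
    rw [hcast, ← Real.rpow_sub hq0] at hMp
    set D : ℝ := ((p:ℝ)+1)^α - (p:ℝ)^α with hD
    have hqD : (0:ℝ) < q ^ D := Real.rpow_pos_of_pos hq0 D
    have hHp : (0:ℝ) < H ^ (p+1) := pow_pos (by linarith) _
    have hlog : D * Real.log q ≤ Real.log C0 + ((p:ℝ)+1) * Real.log H := by
      have := Real.log_le_log hqD hMp
      rw [Real.log_rpow hq0, Real.log_mul (ne_of_gt hC0) (ne_of_gt hHp),
        Real.log_pow] at this
      push_cast at this
      linarith
    -- lower bound on D
    have hD1 : ((p:ℝ)+1)^(α-1) ≤ D := by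
      have hpa : (p:ℝ)^α ≤ (p:ℝ) * ((p:ℝ)+1)^(α-1) := by
        rcases Nat.eq_zero_or_pos p with h0 | h0
        · subst h0
          simp only [Nat.cast_zero, Real.zero_rpow (ne_of_gt hα0), zero_mul, le_refl]
        · have hp0 : (0:ℝ) < (p:ℝ) := by exact_mod_cast h0
          have : (p:ℝ)^α = (p:ℝ) * (p:ℝ)^(α-1) := by
            rw [show α = 1 + (α-1) by ring, Real.rpow_add hp0, Real.rpow_one]; ring_nf
          rw [this]
          have : (p:ℝ)^(α-1) ≤ ((p:ℝ)+1)^(α-1) :=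
            Real.rpow_le_rpow hp0.le (by linarith) (by linarith)
          nlinarith
      have hpa1 : ((p:ℝ)+1)^α = ((p:ℝ)+1) * ((p:ℝ)+1)^(α-1) := by
        rw [show α = 1 + (α-1) by ring, Real.rpow_add (by positivity : (0:ℝ) < (p:ℝ)+1), Real.rpow_one]; ring_nf
      rw [hD, hpa1]
      nlinarith [Real.rpow_nonneg (by positivity : (0:ℝ) ≤ (p:ℝ)+1) (α-1)]
    have hsplit : ((p:ℝ)+1)^(α-1) = ((p:ℝ)+1) * ((p:ℝ)+1)^(α-2) := by
      rw [show α - 1 = 1 + (α-2) by ring, Real.rpow_add (by positivity : (0:ℝ) < (p:ℝ)+1), Real.rpow_one]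
    have hp1 : (1:ℝ) ≤ (p:ℝ)+1 := le_add_of_nonneg_left (Nat.cast_nonneg p)
    have habs : |Real.log C0| ≥ Real.log C0 := le_abs_self _
    have habs0 : (0:ℝ) ≤ |Real.log C0| := abs_nonneg _
    -- combine
    have hmain : ((p:ℝ)+1) * (((p:ℝ)+1)^(α-2) * Real.log q)
        ≤ ((p:ℝ)+1) * (|Real.log C0| + Real.log H) := by
      have h6 : ((p:ℝ)+1)^(α-1) * Real.log q ≤ D * Real.log q :=
        mul_le_mul_of_nonneg_right hD1 hlq.le
      have h7 : Real.log C0 + ((p:ℝ)+1) * Real.log H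
          ≤ ((p:ℝ)+1) * (|Real.log C0| + Real.log H) := by nlinarith
      calc ((p:ℝ)+1) * (((p:ℝ)+1)^(α-2) * Real.log q)
          = ((p:ℝ)+1)^(α-1) * Real.log q := by rw [hsplit]; ring
        _ ≤ D * Real.log q := h6
        _ ≤ Real.log C0 + ((p:ℝ)+1) * Real.log H := hlog
        _ ≤ _ := h7
    have hp0' : (0:ℝ) < (p:ℝ)+1 := by positivity
    have := le_of_mul_le_mul_left hmain hp0'
    -- this : ((p:ℝ)+1)^(α-2) * log q ≤ |log C0| + log H
    have hgt : c * Real.log q < ((p:ℝ)+1)^(α-2) * Real.log q :=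
      mul_lt_mul_of_pos_right hp hlq
    rw [hc, div_mul_cancel₀ _ (ne_of_gt hlq)] at hgt
    linarith
end

section
/- Let M be a weight sequence, S an unbounded sector bisected by the positive real line, and G an optimal {M}-flat function on S with kernel e(z) = G(1/z). Then for every p ∈ ℕ_0 the p-th moment μ(p) = ∫_0^∞ t^p e(t) dt satisfies μ(p) ≥ (K_1 K_2^{p+1}/(p+1)) M_{p+1}, where K_1, K_2 are the constants from the lower bound e(x) ≥ K_1 h_M(K_2/x) for x > 0. -/
open MeasureTheory

/-- Lower bound for the moments of a kernel bounded below by the associated function. -/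
theorem moments_lower_bound (M : ℕ → ℝ) (hpos : ∀ p, 0 < M p) (hM0 : M 0 = 1)
    (hlc : ∀ p : ℕ, M (p+1) / M p ≤ M (p+2) / M (p+1))
    (hqinf : Filter.Tendsto (fun p : ℕ => M (p+1) / M p) Filter.atTop Filter.atTop)
    (e : ℝ → ℝ) (hepos : ∀ x : ℝ, 0 < x → 0 < e x)
    (K1 K2 : ℝ) (hK1 : 0 < K1) (hK2 : 0 < K2)
    (hlow : ∀ x : ℝ, 0 < x → K1 * (⨅ q : ℕ, M q * (K2 / x) ^ q) ≤ e x) :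
    ∀ p : ℕ,
      ENNReal.ofReal (K1 * K2 ^ (p+1) / (p+1) * M (p+1)) ≤
        ∫⁻ t in Set.Ioi (0:ℝ), ENNReal.ofReal (t ^ p * e t) := by
  intro p
  set m := M (p+1) / M p with hmdef
  have hm : 0 < m := div_pos (hpos _) (hpos _)
  have hmono : Monotone (fun q => M (q+1) / M q) := monotone_nat_of_le_succ hlc
  have key : ∀ q, M (p+1) * m ^ q ≤ M q * m ^ (p+1) := by
    have A : ∀ q, q ≤ p + 1 → M (p+1) ≤ M (p+1-q) * m ^ q := by
      intro q hq
      induction q with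
      | zero => simp
      | succ n ih =>
        have hn : n ≤ p + 1 := Nat.le_of_succ_le hq
        have ih' := ih hn
        have hjn : p + 1 - n = (p + 1 - (n+1)) + 1 := by omega
        set j := p + 1 - (n+1) with hj
        have hjp : j ≤ p := by omega
        have hstep : M (j+1) ≤ M j * m := by
          have h1 : M (j+1) / M j ≤ m := hmono hjp
          have := (div_le_iff₀ (hpos j)).mp h1
          linarith
        calc M (p+1) ≤ M (j+1) * m ^ n := by rw [hjn] at ih'; exact ih'
          _ ≤ (M j * m) * m ^ n :=
              mul_le_mul_of_nonneg_right hstep (pow_nonneg hm.le n)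
          _ = M j * m ^ (n+1) := by ring
    have B : ∀ d, M (p+1) * m ^ d ≤ M (p+1+d) := by
      intro d; induction d with
      | zero => simp
      | succ n ih =>
        have h1 : m ≤ M (p+1+n+1) / M (p+1+n) := hmono (by omega)
        have hstep : M (p+1+n) * m ≤ M (p+1+n+1) := by
          have := (le_div_iff₀ (hpos (p+1+n))).mp h1
          linarith
        calc M (p+1) * m ^ (n+1) = (M (p+1) * m ^ n) * m := by ring
          _ ≤ M (p+1+n) * m := mul_le_mul_of_nonneg_right ih hm.le
          _ ≤ M (p+1+n+1) := hstep
          _ = M (p+1+(n+1)) := by norm_num [Nat.add_assoc]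
    intro q
    rcases le_or_gt q (p+1) with h | h
    · have hA := A (p+1-q) (by omega)
      have hq' : p + 1 - (p+1-q) = q := by omega
      rw [hq'] at hA
      calc M (p+1) * m^q ≤ (M q * m^(p+1-q)) * m^q :=
            mul_le_mul_of_nonneg_right hA (pow_nonneg hm.le q)
        _ = M q * m^(p+1) := by
            rw [mul_assoc, ← pow_add]
            congr 2
            omega
    · obtain ⟨d, rfl⟩ : ∃ d, q = p+1+d := ⟨q - (p+1), by omega⟩
      calc M (p+1) * m ^ (p+1+d) = (M (p+1) * m^d) * m^(p+1) := by
            rw [pow_add]; ring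
        _ ≤ M (p+1+d) * m^(p+1) :=
            mul_le_mul_of_nonneg_right (B d) (pow_nonneg hm.le _)
  set x := K2 * m with hxdef
  have hx : 0 < x := mul_pos hK2 hm
  set c := M (p+1) / m ^ (p+1) with hcdef
  have hc : 0 < c := div_pos (hpos _) (pow_pos hm _)
  have hcle : ∀ q, c ≤ M q / m ^ q := by
    intro q
    rw [hcdef, div_le_div_iff₀ (pow_pos hm _) (pow_pos hm _)]
    exact key q
  have hlowpt : ∀ t ∈ Set.Ioc (0:ℝ) x, K1 * c * t^p ≤ t^p * e t := by
    intro t ht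
    obtain ⟨ht0, htx⟩ := ht
    have hinf : c ≤ ⨅ q : ℕ, M q * (K2 / t) ^ q := by
      apply le_ciInf
      intro q
      have h1 : (1:ℝ)/m ≤ K2 / t := by
        rw [div_le_div_iff₀ hm ht0]
        calc 1 * t ≤ 1 * x := by linarith
          _ = K2 * m := by rw [hxdef]; ring
      calc c ≤ M q / m ^ q := hcle q
        _ = M q * (1/m) ^ q := by rw [one_div, inv_pow, div_eq_mul_inv]
        _ ≤ M q * (K2 / t) ^ q :=
            mul_le_mul_of_nonneg_left
              (pow_le_pow_left₀ (by positivity) h1 q) (hpos q).le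
    have he : K1 * c ≤ e t :=
      le_trans (mul_le_mul_of_nonneg_left hinf hK1.le) (hlow t ht0)
    calc K1 * c * t^p ≤ e t * t^p :=
          mul_le_mul_of_nonneg_right he (pow_nonneg ht0.le p)
      _ = t^p * e t := by ring
  -- the integral chain
  have hmeas : MeasurableSet (Set.Ioc (0:ℝ) x) := measurableSet_Ioc
  have step1 : ∫⁻ t in Set.Ioc (0:ℝ) x, ENNReal.ofReal (K1 * c * t^p) ≤
      ∫⁻ t in Set.Ioi (0:ℝ), ENNReal.ofReal (t ^ p * e t) := by
    calc ∫⁻ t in Set.Ioc (0:ℝ) x, ENNReal.ofReal (K1 * c * t^p)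
        ≤ ∫⁻ t in Set.Ioc (0:ℝ) x, ENNReal.ofReal (t ^ p * e t) := by
          apply setLIntegral_mono' hmeas
          intro t ht
          exact ENNReal.ofReal_le_ofReal (hlowpt t ht)
      _ ≤ ∫⁻ t in Set.Ioi (0:ℝ), ENNReal.ofReal (t ^ p * e t) :=
          lintegral_mono_set Set.Ioc_subset_Ioi_self
  have hint : IntegrableOn (fun t : ℝ => K1 * c * t^p) (Set.Ioc (0:ℝ) x) :=
    (Continuous.integrableOn_Ioc (by continuity))
  have step2 : ∫⁻ t in Set.Ioc (0:ℝ) x, ENNReal.ofReal (K1 * c * t^p) =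
      ENNReal.ofReal (∫ t in Set.Ioc (0:ℝ) x, K1 * c * t^p) := by
    rw [← ofReal_integral_eq_lintegral_ofReal hint]
    filter_upwards [ae_restrict_mem hmeas] with t ht
    have ht0 : 0 < t := ht.1
    positivity
  have step3 : ∫ t in Set.Ioc (0:ℝ) x, K1 * c * t^p =
      K1 * c * (x ^ (p+1) / (p+1)) := by
    rw [← intervalIntegral.integral_of_le hx.le,
      intervalIntegral.integral_const_mul, integral_pow]
    simp
  refine le_trans (le_of_eq ?_) step1
  rw [step2, step3]
  congr 1
  rw [hcdef, hxdef]
  have hm' : m ≠ 0 := ne_of_gt hm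
  have hp1 : ((p:ℝ)+1) ≠ 0 := by positivity
  field_simp
  ring
end

section
/- Let M be a weight sequence with quotients m_p → ∞, and suppose e: (0,∞) → (0,∞) satisfies e(t) ≤ K_3 h_M(K_4/t) for all t > 0. Then for every p ∈ ℕ_0, the moment μ(p) = ∫_0^∞ t^p e(t) dt satisfies μ(p) ≤ K_3 K_4^{p+1} M_{p+1} (2 + log(m_{p+1}/m_p)). In particular, if M satisfies sm, then there exist C, h > 0 with μ(p) ≤ C h^p M_{p+1} for all p. -/
open MeasureTheory

/-- Upper bound for the moments of a kernel bounded above by the associated function,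
and the consequence under the shifted moments condition. -/
theorem moments_upper_bound (M : ℕ → ℝ) (hpos : ∀ p, 0 < M p) (hM0 : M 0 = 1)
    (hlc : ∀ p : ℕ, M (p+1) / M p ≤ M (p+2) / M (p+1))
    (hqinf : Filter.Tendsto (fun p : ℕ => M (p+1) / M p) Filter.atTop Filter.atTop)
    (e : ℝ → ℝ) (hepos : ∀ x : ℝ, 0 < x → 0 < e x)
    (K3 K4 : ℝ) (hK3 : 0 < K3) (hK4 : 0 < K4)
    (hup : ∀ t : ℝ, 0 < t → e t ≤ K3 * (⨅ q : ℕ, M q * (K4 / t) ^ q)) :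
    (∀ p : ℕ,
      (∫⁻ t in Set.Ioi (0:ℝ), ENNReal.ofReal (t ^ p * e t)) ≤
        ENNReal.ofReal (K3 * K4 ^ (p+1) * M (p+1) *
          (2 + Real.log ((M (p+2) / M (p+1)) / (M (p+1) / M p))))) ∧
    ((∃ C0 > (0:ℝ), ∃ H > (1:ℝ), ∀ p : ℕ,
        Real.log ((M (p+2) / M (p+1)) / (M (p+1) / M p)) ≤ C0 * H ^ (p+1)) →
      ∃ C > (0:ℝ), ∃ h > (0:ℝ), ∀ p : ℕ,
        (∫⁻ t in Set.Ioi (0:ℝ), ENNReal.ofReal (t ^ p * e t)) ≤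
          ENNReal.ofReal (C * h ^ p * M (p+1))) := by
  have key : ∀ p : ℕ,
      (∫⁻ t in Set.Ioi (0:ℝ), ENNReal.ofReal (t ^ p * e t)) ≤
        ENNReal.ofReal (K3 * K4 ^ (p+1) * M (p+1) *
          (2 + Real.log ((M (p+2) / M (p+1)) / (M (p+1) / M p)))) := by
    intro p
    have hMp := hpos p
    have hMp1 := hpos (p+1)
    have hMp2 := hpos (p+2)
    set mp : ℝ := M (p+1) / M p with hmp
    set mp1 : ℝ := M (p+2) / M (p+1) with hmp1
    have hmp0 : 0 < mp := div_pos hMp1 hMp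
    have hmp10 : 0 < mp1 := div_pos hMp2 hMp1
    have hmple : mp ≤ mp1 := hlc p
    set a : ℝ := K4 * mp with ha
    set b : ℝ := K4 * mp1 with hb
    have ha0 : 0 < a := mul_pos hK4 hmp0
    have hb0 : 0 < b := mul_pos hK4 hmp10
    have hab : a ≤ b := mul_le_mul_of_nonneg_left hmple hK4.le
    have hbound : ∀ t : ℝ, 0 < t → ∀ q : ℕ, e t ≤ K3 * (M q * (K4 / t) ^ q) := by
      intro t ht q
      refine (hup t ht).trans (mul_le_mul_of_nonneg_left ?_ hK3.le)
      refine ciInf_le ⟨0, ?_⟩ q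
      rintro x ⟨r, rfl⟩
      exact mul_nonneg (hpos r).le (by positivity)
    -- split the integral
    have hsplit :
        (∫⁻ t in Set.Ioi (0:ℝ), ENNReal.ofReal (t ^ p * e t)) =
          (∫⁻ t in Set.Ioc 0 a, ENNReal.ofReal (t ^ p * e t)) +
            ((∫⁻ t in Set.Ioc a b, ENNReal.ofReal (t ^ p * e t)) +
              (∫⁻ t in Set.Ioi b, ENNReal.ofReal (t ^ p * e t))) := by
      rw [← Set.Ioc_union_Ioi_eq_Ioi ha0.le,
        lintegral_union measurableSet_Ioi (Set.Ioc_disjoint_Ioi le_rfl),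
        ← Set.Ioc_union_Ioi_eq_Ioi hab,
        lintegral_union measurableSet_Ioi (Set.Ioc_disjoint_Ioi le_rfl)]
    -- piece 1
    have h1 : (∫⁻ t in Set.Ioc 0 a, ENNReal.ofReal (t ^ p * e t)) ≤
        ENNReal.ofReal (K3 * K4 ^ (p+1) * M (p+1)) := by
      have hle : ∀ t ∈ Set.Ioc (0:ℝ) a, ENNReal.ofReal (t ^ p * e t) ≤
          ENNReal.ofReal (K3 * (M p * K4 ^ p)) := by
        intro t ht
        apply ENNReal.ofReal_le_ofReal
        have h1 := mul_le_mul_of_nonneg_left (hbound t ht.1 p) (pow_nonneg ht.1.le p)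
        refine h1.trans_eq ?_
        have htne : t ≠ 0 := ht.1.ne'
        rw [div_pow]
        field_simp
      calc (∫⁻ t in Set.Ioc 0 a, ENNReal.ofReal (t ^ p * e t))
          ≤ ∫⁻ _ in Set.Ioc 0 a, ENNReal.ofReal (K3 * (M p * K4 ^ p)) :=
            setLIntegral_mono' measurableSet_Ioc hle
        _ = ENNReal.ofReal (K3 * (M p * K4 ^ p)) * ENNReal.ofReal a := by
            rw [setLIntegral_const, Real.volume_Ioc, sub_zero]
        _ = ENNReal.ofReal (K3 * (M p * K4 ^ p) * a) := by
            rw [← ENNReal.ofReal_mul (by positivity)]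
        _ = ENNReal.ofReal (K3 * K4 ^ (p+1) * M (p+1)) := by
            congr 1
            rw [ha, hmp]
            field_simp
            ring
    -- piece 2
    have h2 : (∫⁻ t in Set.Ioc a b, ENNReal.ofReal (t ^ p * e t)) ≤
        ENNReal.ofReal (K3 * K4 ^ (p+1) * M (p+1) * Real.log (mp1 / mp)) := by
      set c2 : ℝ := K3 * (M (p+1) * K4 ^ (p+1)) with hc2
      have hc2pos : 0 < c2 := by positivity
      have hle : ∀ t ∈ Set.Ioc a b, ENNReal.ofReal (t ^ p * e t) ≤
          ENNReal.ofReal (c2 / t) := by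
        intro t ht
        have ht0 : 0 < t := ha0.trans_le ht.1.le
        apply ENNReal.ofReal_le_ofReal
        have h1 := mul_le_mul_of_nonneg_left (hbound t ht0 (p+1)) (pow_nonneg ht0.le p)
        refine h1.trans_eq ?_
        have htne : t ≠ 0 := ht0.ne'
        rw [div_pow, hc2]
        field_simp
        ring
      have hmeas : ∀ t ∈ Set.uIcc a b, t ≠ 0 := by
        intro t ht
        rw [Set.uIcc_of_le hab] at ht
        exact (ha0.trans_le ht.1).ne'
      have hii : IntervalIntegrable (fun t : ℝ => c2 * (1 / t)) volume a b := by
        exact (intervalIntegral.intervalIntegrable_one_div hmeas continuousOn_id).const_mul c2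
      have hint : IntegrableOn (fun t : ℝ => c2 / t) (Set.Ioc a b) := by
        have := hii.1
        simpa [div_eq_mul_one_div c2] using this
      calc (∫⁻ t in Set.Ioc a b, ENNReal.ofReal (t ^ p * e t))
          ≤ ∫⁻ t in Set.Ioc a b, ENNReal.ofReal (c2 / t) :=
            setLIntegral_mono' measurableSet_Ioc hle
        _ = ENNReal.ofReal (∫ t in Set.Ioc a b, c2 / t) := by
            rw [← ofReal_integral_eq_lintegral_ofReal hint]
            filter_upwards [ae_restrict_mem measurableSet_Ioc] with t ht
            have ht0 : 0 < t := ha0.trans_le ht.1.le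
            positivity
        _ = ENNReal.ofReal (c2 * Real.log (b / a)) := by
            congr 1
            rw [← intervalIntegral.integral_of_le hab]
            simp only [div_eq_mul_one_div c2]
            rw [intervalIntegral.integral_const_mul, integral_one_div]
            intro h0
            rw [Set.uIcc_of_le hab] at h0
            exact absurd h0.1 (not_le.mpr ha0)
        _ = ENNReal.ofReal (K3 * K4 ^ (p+1) * M (p+1) * Real.log (mp1 / mp)) := by
            congr 1
            have : b / a = mp1 / mp := by
              rw [ha, hb, mul_div_mul_left _ _ hK4.ne']
            rw [this, hc2]; ring
    -- piece 3
    have h3 : (∫⁻ t in Set.Ioi b, ENNReal.ofReal (t ^ p * e t)) ≤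
        ENNReal.ofReal (K3 * K4 ^ (p+1) * M (p+1)) := by
      set c3 : ℝ := K3 * (M (p+2) * K4 ^ (p+2)) with hc3
      have hc3pos : 0 < c3 := by positivity
      have hle : ∀ t ∈ Set.Ioi b, ENNReal.ofReal (t ^ p * e t) ≤
          ENNReal.ofReal (c3 * t ^ (-2 : ℝ)) := by
        intro t ht
        have ht0 : 0 < t := hb0.trans ht
        apply ENNReal.ofReal_le_ofReal
        have h1 := mul_le_mul_of_nonneg_left (hbound t ht0 (p+2)) (pow_nonneg ht0.le p)
        refine h1.trans_eq ?_
        have htne : t ≠ 0 := ht0.ne'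
        have hrp : t ^ (-2 : ℝ) = (t ^ 2)⁻¹ := by
          rw [show ((-2 : ℝ)) = -((2:ℕ) : ℝ) by norm_num, Real.rpow_neg ht0.le,
            Real.rpow_natCast]
        rw [hrp, div_pow, hc3]
        field_simp
        ring
      have hint : IntegrableOn (fun t : ℝ => c3 * t ^ (-2 : ℝ)) (Set.Ioi b) :=
        (integrableOn_Ioi_rpow_of_lt (by norm_num) hb0).const_mul c3
      calc (∫⁻ t in Set.Ioi b, ENNReal.ofReal (t ^ p * e t))
          ≤ ∫⁻ t in Set.Ioi b, ENNReal.ofReal (c3 * t ^ (-2 : ℝ)) :=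
            setLIntegral_mono' measurableSet_Ioi hle
        _ = ENNReal.ofReal (∫ t in Set.Ioi b, c3 * t ^ (-2 : ℝ)) := by
            rw [← ofReal_integral_eq_lintegral_ofReal hint]
            filter_upwards [ae_restrict_mem measurableSet_Ioi] with t ht
            have ht0 : 0 < t := hb0.trans ht
            positivity
        _ = ENNReal.ofReal (c3 * b⁻¹) := by
            congr 1
            rw [MeasureTheory.integral_const_mul, integral_Ioi_rpow_of_lt (by norm_num) hb0]
            norm_num [Real.rpow_neg_one]
        _ = ENNReal.ofReal (K3 * K4 ^ (p+1) * M (p+1)) := by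
            congr 1
            rw [hc3, hb, hmp1]
            field_simp
            ring
    rw [hsplit]
    calc _ ≤ ENNReal.ofReal (K3 * K4 ^ (p+1) * M (p+1)) +
        (ENNReal.ofReal (K3 * K4 ^ (p+1) * M (p+1) * Real.log (mp1 / mp)) +
          ENNReal.ofReal (K3 * K4 ^ (p+1) * M (p+1))) :=
          add_le_add h1 (add_le_add h2 h3)
      _ = ENNReal.ofReal (K3 * K4 ^ (p+1) * M (p+1) * (2 + Real.log (mp1 / mp))) := by
          have hL : 0 ≤ Real.log (mp1 / mp) :=
            Real.log_nonneg ((one_le_div hmp0).mpr hmple)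
          rw [← ENNReal.ofReal_add (by positivity) (by positivity),
            ← ENNReal.ofReal_add (by positivity) (by positivity)]
          congr 1
          ring
  refine ⟨key, ?_⟩
  rintro ⟨C0, hC0, H, hH, hsm⟩
  have hH0 : (0:ℝ) < H := lt_trans one_pos hH
  refine ⟨K3 * K4 * (2 + C0 * H), by positivity, K4 * H, by positivity, fun p => ?_⟩
  refine (key p).trans (ENNReal.ofReal_le_ofReal ?_)
  have hHp : (1:ℝ) ≤ H ^ p := by
    induction p with
    | zero => norm_num
    | succ n ih => rw [pow_succ]; nlinarith
  have hL : Real.log ((M (p+2) / M (p+1)) / (M (p+1) / M p)) ≤ C0 * H ^ (p+1) := hsm p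
  have h2le : 2 + Real.log ((M (p+2) / M (p+1)) / (M (p+1) / M p)) ≤ (2 + C0 * H) * H ^ p := by
    have : C0 * H ^ (p+1) = C0 * H * H ^ p := by ring
    nlinarith
  calc K3 * K4 ^ (p+1) * M (p+1) * (2 + Real.log ((M (p+2) / M (p+1)) / (M (p+1) / M p)))
      ≤ K3 * K4 ^ (p+1) * M (p+1) * ((2 + C0 * H) * H ^ p) := by
        have := hpos (p+1)
        apply mul_le_mul_of_nonneg_left h2le
        positivity
    _ = K3 * K4 * (2 + C0 * H) * (K4 * H) ^ p * M (p+1) := by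
        rw [mul_pow]; ring
end

section
/- Let M be a weight sequence and e: (0,∞) → (0,∞) with e(t) ≥ K_1 h_M(K_2/t) for all t > 0. If there exist C, h > 0 such that the moments μ(p) = ∫_0^∞ t^p e(t) dt satisfy μ(p) ≤ C h^p M_{p+1} for all p ∈ ℕ_0, then M satisfies sm; indeed K_1 K_2^{p+1} M_{p+1} log(m_{p+1}/m_p) ≤ C h^p M_{p+1} for all p. -/
/-!
On the interval `K₂ m_p < t < K₂ m_{p+1}` the infimum `h_M(K₂/t) = inf_q M_q (K₂/t)^q` is attained
at `q = p + 1`, because `M_q s^q` decreases while `s m_q ≤ 1` and increases afterwards. There the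
lower bound on `e` reads `t^p e(t) ≥ K₁ K₂^{p+1} M_{p+1} / t`, and integrating `1/t` over the
interval produces `log (K₂ m_{p+1} / K₂ m_p) = log (m_{p+1}/m_p)`; comparing with the moment bound
gives the inequality for each `p`, and dividing by `K₁ K₂^{p+1} M_{p+1}` shows that
`log (m_{p+1}/m_p)` grows at most geometrically.
-/

open MeasureTheory Set

noncomputable def associatedFn (M : ℕ → ℝ) (s : ℝ) : ℝ := ⨅ q : ℕ, M q * s ^ q

lemma mul_pow_succ_le_associatedFn {M : ℕ → ℝ} (hpos : ∀ p, 0 < M p)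
    (hmono : Monotone fun p => M (p + 1) / M p) {p : ℕ} {s : ℝ} (hs : 0 < s)
    (h1 : s * (M (p + 1) / M p) ≤ 1) (h2 : 1 ≤ s * (M (p + 2) / M (p + 1))) :
    M (p + 1) * s ^ (p + 1) ≤ associatedFn M s := by
  set f : ℕ → ℝ := fun q => M q * s ^ q
  have hf_nonneg (n : ℕ) : 0 ≤ f n := by have := hpos n; positivity
  have hf_succ (n : ℕ) : f (n + 1) = f n * (s * (M (n + 1) / M n)) := by
    simp only [f]; field_simp [(hpos n).ne']; ring
  have hdown : ∀ n < p + 1, f (n + 1) ≤ f n := fun n hn => by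
    rw [hf_succ]
    exact mul_le_of_le_one_right (hf_nonneg n)
      ((mul_le_mul_of_nonneg_left (hmono (Nat.lt_succ_iff.mp hn)) hs.le).trans h1)
  have hup : ∀ n, p + 1 ≤ n → f n ≤ f (n + 1) := fun n hn => by
    rw [hf_succ]
    exact le_mul_of_one_le_right (hf_nonneg n)
      (h2.trans (mul_le_mul_of_nonneg_left (hmono hn) hs.le))
  refine le_ciInf fun q => ?_
  rcases le_total q (p + 1) with hq | hq
  · exact Nat.decreasingInduction (motive := fun q _ => f (p + 1) ≤ f q)
      (fun k hk ih => ih.trans (hdown k hk)) le_rfl hq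
  · exact Nat.rel_of_forall_rel_succ_of_le_of_le (· ≤ ·) hup le_rfl hq

lemma ofReal_mul_log_div_le_setLIntegral {f : ℝ → ℝ} {a b c : ℝ} (ha : 0 < a) (hab : a ≤ b)
    (hc : 0 ≤ c) (hf : ∀ t ∈ Ioo a b, c / t ≤ f t) :
    ENNReal.ofReal (c * Real.log (b / a)) ≤ ∫⁻ t in Ioo a b, ENNReal.ofReal (f t) := by
  have hcont : ContinuousOn (fun t : ℝ => c / t) (Icc a b) :=
    continuousOn_const.div continuousOn_id fun t ht => (ha.trans_le ht.1).ne'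
  have hint : ∫ t in Ioo a b, c / t = c * Real.log (b / a) := by
    rw [← integral_Ioc_eq_integral_Ioo, ← intervalIntegral.integral_of_le hab]
    simp_rw [div_eq_mul_inv c]
    rw [intervalIntegral.integral_const_mul, integral_inv_of_pos ha (ha.trans_le hab)]
  calc ENNReal.ofReal (c * Real.log (b / a))
      = ∫⁻ t in Ioo a b, ENNReal.ofReal (c / t) := by
        rw [← hint, ofReal_integral_eq_lintegral_ofReal
          (hcont.integrableOn_Icc.mono_set Ioo_subset_Icc_self)
          ((ae_restrict_iff' measurableSet_Ioo).mpr
            (ae_of_all _ fun t ht => div_nonneg hc (ha.trans ht.1).le))]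
    _ ≤ ∫⁻ t in Ioo a b, ENNReal.ofReal (f t) :=
        setLIntegral_mono' measurableSet_Ioo fun t ht => ENNReal.ofReal_le_ofReal (hf t ht)

lemma mul_log_le_of_setLIntegral_le {M : ℕ → ℝ} (hpos : ∀ p, 0 < M p)
    (hmono : Monotone fun p => M (p + 1) / M p) {e : ℝ → ℝ} {K1 K2 : ℝ} (hK1 : 0 < K1)
    (hK2 : 0 < K2) (hlow : ∀ t : ℝ, 0 < t → K1 * associatedFn M (K2 / t) ≤ e t) {p : ℕ} {B : ℝ}
    (hB : 0 ≤ B) (hmom : ∫⁻ t in Ioi (0:ℝ), ENNReal.ofReal (t ^ p * e t) ≤ ENNReal.ofReal B) :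
    K1 * K2 ^ (p + 1) * M (p + 1) * Real.log ((M (p + 2) / M (p + 1)) / (M (p + 1) / M p)) ≤
      B := by
  set c := K1 * K2 ^ (p + 1) * M (p + 1)
  have hc : 0 < c := by have := hpos (p + 1); positivity
  set a := K2 * (M (p + 1) / M p)
  set b := K2 * (M (p + 2) / M (p + 1))
  have ha : 0 < a := mul_pos hK2 (div_pos (hpos _) (hpos _))
  have hb : 0 < b := mul_pos hK2 (div_pos (hpos _) (hpos _))
  rw [← mul_div_mul_left (M (p + 2) / M (p + 1)) _ hK2.ne']
  rcases le_total b a with hba | hab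
  · have hlog : Real.log (b / a) ≤ 0 :=
      Real.log_nonpos (div_pos hb ha).le ((div_le_one ha).mpr hba)
    exact (mul_nonpos_of_nonneg_of_nonpos hc.le hlog).trans hB
  have hpt : ∀ t ∈ Ioo a b, c / t ≤ t ^ p * e t := fun t ht => by
    have ht0 : 0 < t := ha.trans ht.1
    have h1 : K2 / t * (M (p + 1) / M p) ≤ 1 := by
      rw [div_mul_eq_mul_div, div_le_one ht0]; exact ht.1.le
    have h2 : 1 ≤ K2 / t * (M (p + 2) / M (p + 1)) := by
      rw [div_mul_eq_mul_div, one_le_div ht0]; exact ht.2.le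
    have hmin := mul_pow_succ_le_associatedFn hpos hmono (div_pos hK2 ht0) h1 h2
    calc c / t = t ^ p * (K1 * (M (p + 1) * (K2 / t) ^ (p + 1))) := by
          rw [div_pow, pow_succ t]; field_simp; ring
      _ ≤ t ^ p * e t := by
          gcongr
          exact (mul_le_mul_of_nonneg_left hmin hK1.le).trans (hlow t ht0)
  refine (ENNReal.ofReal_le_ofReal_iff hB).mp ?_
  calc ENNReal.ofReal (c * Real.log (b / a))
      ≤ ∫⁻ t in Ioo a b, ENNReal.ofReal (t ^ p * e t) :=
        ofReal_mul_log_div_le_setLIntegral ha hab hc.le hpt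
    _ ≤ ∫⁻ t in Ioi 0, ENNReal.ofReal (t ^ p * e t) :=
        lintegral_mono_set fun t ht => ha.trans ht.1
    _ ≤ ENNReal.ofReal B := hmom

lemma exists_le_mul_pow_succ_of_le_mul_pow {x : ℕ → ℝ} {A r : ℝ} (hA : 0 < A) (hr : 0 < r)
    (hx : ∀ p, x p ≤ A * r ^ p) : ∃ C0 > (0:ℝ), ∃ H > (1:ℝ), ∀ p, x p ≤ C0 * H ^ (p + 1) := by
  refine ⟨A, hA, r + 1, by linarith, fun p => (hx p).trans ?_⟩
  gcongr A * ?_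
  calc r ^ p ≤ (r + 1) ^ p := by gcongr; linarith
    _ ≤ (r + 1) ^ (p + 1) := pow_le_pow_right₀ (by linarith) p.le_succ

theorem moments_bound_implies_sm_general (M : ℕ → ℝ) (hpos : ∀ p, 0 < M p)
    (hlc : ∀ p : ℕ, M (p+1) / M p ≤ M (p+2) / M (p+1))
    (e : ℝ → ℝ)
    (K1 K2 : ℝ) (hK1 : 0 < K1) (hK2 : 0 < K2)
    (hlow : ∀ t : ℝ, 0 < t → K1 * (⨅ q : ℕ, M q * (K2 / t) ^ q) ≤ e t)
    (C h : ℝ) (hC : 0 < C) (hh : 0 < h)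
    (hmom : ∀ p : ℕ,
      (∫⁻ t in Set.Ioi (0:ℝ), ENNReal.ofReal (t ^ p * e t)) ≤
        ENNReal.ofReal (C * h ^ p * M (p+1))) :
    (∀ p : ℕ, K1 * K2 ^ (p+1) * M (p+1) *
        Real.log ((M (p+2) / M (p+1)) / (M (p+1) / M p)) ≤ C * h ^ p * M (p+1)) ∧
    (∃ C0 > (0:ℝ), ∃ H > (1:ℝ), ∀ p : ℕ,
        Real.log ((M (p+2) / M (p+1)) / (M (p+1) / M p)) ≤ C0 * H ^ (p+1)) := by
  have key (p : ℕ) := mul_log_le_of_setLIntegral_le hpos (monotone_nat_of_le_succ hlc) hK1 hK2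
    hlow (by have := hpos (p + 1); positivity) (hmom p)
  refine ⟨key, exists_le_mul_pow_succ_of_le_mul_pow (A := C / (K1 * K2)) (r := h / K2)
    (by positivity) (by positivity) fun p => ?_⟩
  have hc : 0 < K1 * K2 ^ (p + 1) * M (p + 1) := by have := hpos (p + 1); positivity
  calc _ ≤ C * h ^ p * M (p + 1) / (K1 * K2 ^ (p + 1) * M (p + 1)) := by
        rw [le_div_iff₀ hc, mul_comm]; exact key p
    _ = C / (K1 * K2) * (h / K2) ^ p := by rw [div_pow]; field_simp [(hpos (p + 1)).ne']; ring

/-- If the moments of a kernel bounded below by the associated function grow like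
`C h ^ p M (p+1)`, then `M` satisfies the shifted moments property. -/
theorem moments_bound_implies_sm (M : ℕ → ℝ) (hpos : ∀ p, 0 < M p) (hM0 : M 0 = 1)
    (hlc : ∀ p : ℕ, M (p+1) / M p ≤ M (p+2) / M (p+1))
    (hqinf : Filter.Tendsto (fun p : ℕ => M (p+1) / M p) Filter.atTop Filter.atTop)
    (e : ℝ → ℝ) (hepos : ∀ x : ℝ, 0 < x → 0 < e x)
    (K1 K2 : ℝ) (hK1 : 0 < K1) (hK2 : 0 < K2)
    (hlow : ∀ t : ℝ, 0 < t → K1 * (⨅ q : ℕ, M q * (K2 / t) ^ q) ≤ e t)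
    (C h : ℝ) (hC : 0 < C) (hh : 0 < h)
    (hmom : ∀ p : ℕ,
      (∫⁻ t in Set.Ioi (0:ℝ), ENNReal.ofReal (t ^ p * e t)) ≤
        ENNReal.ofReal (C * h ^ p * M (p+1))) :
    (∀ p : ℕ, K1 * K2 ^ (p+1) * M (p+1) *
        Real.log ((M (p+2) / M (p+1)) / (M (p+1) / M p)) ≤ C * h ^ p * M (p+1)) ∧
    (∃ C0 > (0:ℝ), ∃ H > (1:ℝ), ∀ p : ℕ,
        Real.log ((M (p+2) / M (p+1)) / (M (p+1) / M p)) ≤ C0 * H ^ (p+1)) :=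
  moments_bound_implies_sm_general M hpos hlc e K1 K2 hK1 hK2 hlow C h hC hh hmom
end

section
/- Let (A_p) be a sequence of nonnegative reals with ∑ A_p convergent, (B_p) a sequence of positive reals with B_p → 0, and (D_p) a nonincreasing sequence of positive reals with D_p → 0. Then there exists a nondecreasing sequence (E_p) of positive reals such that: (i) E_p → ∞; (ii) ∑_{p≥q} E_p A_p ≤ 8 E_q ∑_{p≥q} A_p for every q; (iii) (E_p D_p) is nonincreasing; (iv) E_p B_p → 0. -/
open Filter

noncomputable section

namespace CC16

open scoped Classical

variable (A B D : ℕ → ℝ)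

def tail (q : ℕ) : ℝ := ∑' p, A (q + p)

lemma tail_summable (hAsum : Summable A) (q : ℕ) : Summable (fun p => A (q + p)) := by
  simpa [add_comm] using (summable_nat_add_iff q).2 hAsum

lemma tail_nonneg (hA : ∀ p, 0 ≤ A p) (q : ℕ) : 0 ≤ tail A q :=
  tsum_nonneg (fun p => hA _)

lemma tail_succ (hAsum : Summable A) (q : ℕ) : tail A q = A q + tail A (q + 1) := by
  have h := Summable.tsum_eq_zero_add (tail_summable A hAsum q)
  have h2 : (fun p => A (q + (p + 1))) = fun p => A ((q + 1) + p) := by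
    funext p; congr 1; omega
  simpa [tail, h2] using h

lemma tail_succ_le (hA : ∀ p, 0 ≤ A p) (hAsum : Summable A) (q : ℕ) :
    tail A (q + 1) ≤ tail A q := by
  rw [tail_succ A hAsum q]; nlinarith [hA q]

lemma tail_anti (hA : ∀ p, 0 ≤ A p) (hAsum : Summable A) : Antitone (tail A) :=
  antitone_nat_of_succ_le (fun q => tail_succ_le A hA hAsum q)

lemma tail_tendsto (hAsum : Summable A) : Tendsto (tail A) atTop (nhds 0) := by
  have key : ∀ q, tail A q = (∑' p, A p) - ∑ i ∈ Finset.range q, A i := by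
    intro q
    have h := Summable.sum_add_tsum_nat_add q hAsum
    have h2 : (fun p => A (p + q)) = fun p => A (q + p) := by funext p; congr 1; omega
    rw [h2] at h
    rw [tail, ← h]; ring
  have h1 : Tendsto (fun q => ∑ i ∈ Finset.range q, A i) atTop (nhds (∑' p, A p)) :=
    hAsum.hasSum.tendsto_sum_nat
  have := (tendsto_const_nhds (x := ∑' p, A p) (f := atTop)).sub h1
  have heq : (fun q => (∑' p, A p) - ∑ i ∈ Finset.range q, A i) = tail A := by
    funext q; rw [key q]
  rwa [heq, sub_self] at this

def Cond (p : ℕ) (x : ℝ × ℝ × ℝ) : Prop :=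
  x.1 = x.2.1 ∧ (∀ j, p + 1 ≤ j → B j ≤ ((2 * x.2.1) ^ 2)⁻¹) ∧
    tail A (p + 1) ≤ x.2.2 / 8

def sig : ℕ → ℝ × ℝ × ℝ
  | 0 => (1, 1, tail A 0)
  | p + 1 =>
    let x := sig p
    if Cond A B p x then
      (min (x.1 * D p / D (p + 1)) (2 * x.2.1), 2 * x.2.1, tail A (p + 1))
    else
      (min (x.1 * D p / D (p + 1)) x.2.1, x.2.1, x.2.2)


def E (p : ℕ) : ℝ := (sig A B D p).1
def cc (p : ℕ) : ℝ := (sig A B D p).2.1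
def S (p : ℕ) : ℝ := (sig A B D p).2.2

lemma E_zero : E A B D 0 = 1 := rfl
lemma cc_zero : cc A B D 0 = 1 := rfl
lemma S_zero : S A B D 0 = tail A 0 := rfl

lemma sig_pos {p : ℕ} (h : Cond A B p (sig A B D p)) :
    E A B D (p + 1) = min (E A B D p * D p / D (p + 1)) (2 * cc A B D p) ∧
      cc A B D (p + 1) = 2 * cc A B D p ∧ S A B D (p + 1) = tail A (p + 1) := by
  refine ⟨?_, ?_, ?_⟩ <;> simp [E, cc, S, sig, h]

lemma sig_neg {p : ℕ} (h : ¬ Cond A B p (sig A B D p)) :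
    E A B D (p + 1) = min (E A B D p * D p / D (p + 1)) (cc A B D p) ∧
      cc A B D (p + 1) = cc A B D p ∧ S A B D (p + 1) = S A B D p := by
  refine ⟨?_, ?_, ?_⟩ <;> simp [E, cc, S, sig, h]

lemma Dratio (hD : ∀ p, 0 < D p) (hDmono : Antitone D) (p : ℕ) {e : ℝ} (he : 0 ≤ e) :
    e ≤ e * D p / D (p + 1) := by
  rw [le_div_iff₀ (hD (p + 1))]
  exact mul_le_mul_of_nonneg_left (hDmono (Nat.le_succ p)) he

lemma inv (hA : ∀ p, 0 ≤ A p) (hAsum : Summable A)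
    (hD : ∀ p, 0 < D p) (hDmono : Antitone D) (p : ℕ) :
    0 < E A B D p ∧ cc A B D p / 2 ≤ E A B D p ∧ E A B D p ≤ cc A B D p ∧
      1 ≤ cc A B D p ∧ tail A p ≤ S A B D p := by
  induction p with
  | zero => exact ⟨by norm_num [E_zero], by norm_num [E_zero, cc_zero],
      by norm_num [E_zero, cc_zero], le_refl _, le_refl _⟩
  | succ p ih =>
    obtain ⟨hE, hcE, hEc, hc, hTS⟩ := ih
    have hc0 : (0:ℝ) < cc A B D p := by linarith
    have hratio := Dratio D hD hDmono p hE.le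
    by_cases h : Cond A B p (sig A B D p)
    · obtain ⟨he, hcs, hss⟩ := sig_pos A B D h
      refine ⟨?_, ?_, ?_, ?_, ?_⟩
      · rw [he]; exact lt_min (lt_of_lt_of_le hE hratio) (by linarith)
      · rw [he, hcs]
        have hEc' : E A B D p = cc A B D p := h.1
        have h1 : cc A B D p ≤ E A B D p * D p / D (p + 1) := by
          rw [← hEc']; exact hratio
        have : 2 * cc A B D p / 2 = cc A B D p := by ring
        rw [this]
        exact le_min h1 (by linarith)
      · rw [he, hcs]; exact min_le_right _ _
      · rw [hcs]; linarith
      · rw [hss]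
    · obtain ⟨he, hcs, hss⟩ := sig_neg A B D h
      refine ⟨?_, ?_, ?_, ?_, ?_⟩
      · rw [he]; exact lt_min (lt_of_lt_of_le hE hratio) hc0
      · rw [he, hcs]; exact le_min (by linarith) (by linarith)
      · rw [he, hcs]; exact min_le_right _ _
      · rw [hcs]; exact hc
      · rw [hss]; exact le_trans (tail_succ_le A hA hAsum p) hTS

lemma cc_mono (hA : ∀ p, 0 ≤ A p) (hAsum : Summable A)
    (hD : ∀ p, 0 < D p) (hDmono : Antitone D) : Monotone (cc A B D) := by
  apply monotone_nat_of_le_succ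
  intro p
  have hc := (inv A B D hA hAsum hD hDmono p).2.2.2.1
  by_cases h : Cond A B p (sig A B D p)
  · rw [(sig_pos A B D h).2.1]; linarith
  · rw [(sig_neg A B D h).2.1]

lemma E_mono (hA : ∀ p, 0 ≤ A p) (hAsum : Summable A)
    (hD : ∀ p, 0 < D p) (hDmono : Antitone D) : Monotone (E A B D) := by
  apply monotone_nat_of_le_succ
  intro p
  obtain ⟨hE, hcE, hEc, hc, hTS⟩ := inv A B D hA hAsum hD hDmono p
  have hratio := Dratio D hD hDmono p hE.le
  by_cases h : Cond A B p (sig A B D p)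
  · rw [(sig_pos A B D h).1]; exact le_min hratio (by linarith)
  · rw [(sig_neg A B D h).1]; exact le_min hratio hEc

lemma ED_anti (hA : ∀ p, 0 ≤ A p) (hAsum : Summable A)
    (hD : ∀ p, 0 < D p) (hDmono : Antitone D) : Antitone (fun p => E A B D p * D p) := by
  apply antitone_nat_of_succ_le
  intro p
  obtain ⟨hE, hcE, hEc, hc, hTS⟩ := inv A B D hA hAsum hD hDmono p
  have key : E A B D (p + 1) ≤ E A B D p * D p / D (p + 1) := by
    by_cases h : Cond A B p (sig A B D p)
    · rw [(sig_pos A B D h).1]; exact min_le_left _ _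
    · rw [(sig_neg A B D h).1]; exact min_le_left _ _
  calc E A B D (p + 1) * D (p + 1) ≤ (E A B D p * D p / D (p + 1)) * D (p + 1) :=
        mul_le_mul_of_nonneg_right key (hD (p + 1)).le
    _ = E A B D p * D p := div_mul_cancel₀ _ (hD (p + 1)).ne'


lemma Binv (j : ℕ) :
    cc A B D j = 1 ∨ ∀ i, j ≤ i → B i ≤ ((cc A B D j) ^ 2)⁻¹ := by
  induction j with
  | zero => exact Or.inl rfl
  | succ j ih =>
    by_cases h : Cond A B j (sig A B D j)
    · right
      intro i hi
      rw [(sig_pos A B D h).2.1]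
      exact h.2.1 i hi
    · rw [(sig_neg A B D h).2.1]
      rcases ih with h1 | h1
      · exact Or.inl h1
      · exact Or.inr (fun i hi => h1 i (by omega))

/-- no jump on the stretch -/
lemma noj_ccS (j : ℕ) : ∀ p, j ≤ p →
    (∀ m, j ≤ m → m < p → ¬ Cond A B m (sig A B D m)) →
    cc A B D p = cc A B D j ∧ S A B D p = S A B D j := by
  refine Nat.le_induction ?_ ?_
  · exact fun _ => ⟨rfl, rfl⟩
  · intro p hjp ih hnoj
    have hnc : ¬ Cond A B p (sig A B D p) := hnoj p hjp (by omega)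
    obtain ⟨hc, hs⟩ := ih (fun m hm hm' => hnoj m hm (by omega))
    exact ⟨((sig_neg A B D hnc).2.1).trans hc, ((sig_neg A B D hnc).2.2).trans hs⟩

lemma noj_E (hA : ∀ p, 0 ≤ A p) (hAsum : Summable A)
    (hD : ∀ p, 0 < D p) (hDmono : Antitone D) (j : ℕ) : ∀ p, j ≤ p →
    (∀ m, j ≤ m → m < p → ¬ Cond A B m (sig A B D m)) →
    E A B D p = min (E A B D j * D j / D p) (cc A B D j) := by
  refine Nat.le_induction ?_ ?_
  · intro _
    have hEc := (inv A B D hA hAsum hD hDmono j).2.2.1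
    rw [mul_div_assoc, div_self (hD j).ne', mul_one, min_eq_left hEc]
  · intro p hjp ih hnoj
    have hnc : ¬ Cond A B p (sig A B D p) := hnoj p hjp (by omega)
    have hEp := ih (fun m hm hm' => hnoj m hm (by omega))
    have hcp := (noj_ccS A B D j p hjp (fun m hm hm' => hnoj m hm (by omega))).1
    have hr0 : (0:ℝ) ≤ D p / D (p + 1) := div_nonneg (hD p).le (hD (p + 1)).le
    have hr1 : (1:ℝ) ≤ D p / D (p + 1) := by
      rw [le_div_iff₀ (hD (p + 1))]; simpa using hDmono (Nat.le_succ p)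
    have hc1 : (1:ℝ) ≤ cc A B D j := by
      have := (inv A B D hA hAsum hD hDmono j).2.2.2.1; exact this
    rw [(sig_neg A B D hnc).1, hcp, hEp]
    rw [mul_div_assoc, min_mul_of_nonneg _ _ hr0]
    have ha : E A B D j * D j / D p * (D p / D (p + 1)) = E A B D j * D j / D (p + 1) := by
      rw [div_mul_div_comm, mul_comm (D p) (D (p + 1)), mul_div_mul_right _ _ (hD p).ne']
    rw [ha, min_assoc, min_eq_right (le_mul_of_one_le_right (by linarith) hr1)]

lemma cc_jump (hA : ∀ p, 0 ≤ A p) (hAsum : Summable A)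
    (hB : ∀ p, 0 < B p) (hBlim : Tendsto B atTop (nhds 0))
    (hD : ∀ p, 0 < D p) (hDmono : Antitone D) (hDlim : Tendsto D atTop (nhds 0))
    (j : ℕ) : ∃ m, j < m ∧ 2 * cc A B D j ≤ cc A B D m := by
  obtain ⟨hEj, hcEj, hEcj, hcj, hTSj⟩ := inv A B D hA hAsum hD hDmono j
  have hc0 : (0:ℝ) < cc A B D j := by linarith
  -- thresholds
  have hε : (0:ℝ) < E A B D j * D j / cc A B D j :=
    div_pos (mul_pos hEj (hD j)) hc0
  have h1 : ∀ᶠ p in atTop, D p < E A B D j * D j / cc A B D j :=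
    hDlim.eventually (eventually_lt_nhds hε)
  have hb : (0:ℝ) < ((2 * cc A B D j) ^ 2)⁻¹ := by positivity
  have h2 : ∀ᶠ i in atTop, B i < ((2 * cc A B D j) ^ 2)⁻¹ :=
    hBlim.eventually (eventually_lt_nhds hb)
  have h3 : ∀ᶠ p in atTop, tail A p ≤ S A B D j / 8 := by
    by_cases hS : 0 < S A B D j
    · exact (tail_tendsto A hAsum).eventually (eventually_le_nhds (by linarith))
    · have hS0 : S A B D j = 0 := le_antisymm (by linarith) (le_trans (tail_nonneg A hA j) hTSj)
      have htj : tail A j = 0 := le_antisymm (hS0 ▸ hTSj) (tail_nonneg A hA j)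
      filter_upwards [eventually_ge_atTop j] with p hp
      have h4 : tail A p ≤ 0 := htj ▸ tail_anti A hA hAsum hp
      rw [hS0]
      linarith
  obtain ⟨N, hN⟩ := (h1.and (h2.and h3)).exists_forall_of_atTop
  set p := max N (j + 1) with hp
  have hpN : N ≤ p := le_max_left _ _
  have hjp : j ≤ p := by omega
  by_cases hex : ∃ m, j ≤ m ∧ m < p ∧ Cond A B m (sig A B D m)
  · obtain ⟨m, hm1, hm2, hm3⟩ := hex
    refine ⟨m + 1, by omega, ?_⟩
    rw [(sig_pos A B D hm3).2.1]
    have := cc_mono A B D hA hAsum hD hDmono hm1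
    linarith
  · push_neg at hex
    have hnoj : ∀ m, j ≤ m → m < p → ¬ Cond A B m (sig A B D m) := fun m h1 h2 => hex m h1 h2
    obtain ⟨hcp, hsp⟩ := noj_ccS A B D j p hjp hnoj
    have hEp := noj_E A B D hA hAsum hD hDmono j p hjp hnoj
    obtain ⟨hDp, hBp, hTp⟩ := hN p hpN
    have hEpc : E A B D p = cc A B D j := by
      rw [hEp, min_eq_right]
      rw [le_div_iff₀ (hD p)]
      have := (lt_div_iff₀ hc0).mp hDp
      nlinarith
    have hcond : Cond A B p (sig A B D p) := by
      refine ⟨?_, ?_, ?_⟩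
      · show E A B D p = cc A B D p
        rw [hEpc, hcp]
      · intro i hi
        show B i ≤ ((2 * cc A B D p) ^ 2)⁻¹
        rw [hcp]
        have : N ≤ i := by omega
        exact ((hN i this).2.1).le
      · show tail A (p + 1) ≤ S A B D p / 8
        rw [hsp]
        exact (hN (p + 1) (by omega)).2.2
    refine ⟨p + 1, by omega, ?_⟩
    rw [(sig_pos A B D hcond).2.1, hcp]

lemma cc_unbdd (hA : ∀ p, 0 ≤ A p) (hAsum : Summable A)
    (hB : ∀ p, 0 < B p) (hBlim : Tendsto B atTop (nhds 0))
    (hD : ∀ p, 0 < D p) (hDmono : Antitone D) (hDlim : Tendsto D atTop (nhds 0))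
    (M : ℝ) : ∃ j, M ≤ cc A B D j := by
  have key : ∀ n : ℕ, ∃ j, (2:ℝ) ^ n ≤ cc A B D j := by
    intro n
    induction n with
    | zero => exact ⟨0, by norm_num [cc_zero]⟩
    | succ n ih =>
      obtain ⟨j, hj⟩ := ih
      obtain ⟨m, hm1, hm2⟩ := cc_jump A B D hA hAsum hB hBlim hD hDmono hDlim j
      exact ⟨m, by rw [pow_succ]; nlinarith⟩
  obtain ⟨n, hn⟩ := pow_unbounded_of_one_lt M (one_lt_two (α := ℝ))
  obtain ⟨j, hj⟩ := key n
  exact ⟨j, by linarith⟩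

lemma E_tendsto (hA : ∀ p, 0 ≤ A p) (hAsum : Summable A)
    (hB : ∀ p, 0 < B p) (hBlim : Tendsto B atTop (nhds 0))
    (hD : ∀ p, 0 < D p) (hDmono : Antitone D) (hDlim : Tendsto D atTop (nhds 0)) :
    Tendsto (E A B D) atTop atTop := by
  rw [tendsto_atTop]
  intro M
  set M' := max M 1 with hM'
  have hM'0 : (0:ℝ) < M' := lt_of_lt_of_le one_pos (le_max_right _ _)
  obtain ⟨J, hJ⟩ := cc_unbdd A B D hA hAsum hB hBlim hD hDmono hDlim M'
  have hEJ : 0 < E A B D J := (inv A B D hA hAsum hD hDmono J).1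
  -- lower bound for p ≥ J
  have low : ∀ p, J ≤ p → min (E A B D J * D J / D p) M' ≤ E A B D p := by
    refine Nat.le_induction ?_ ?_
    · rw [mul_div_assoc, div_self (hD J).ne', mul_one]
      exact min_le_of_left_le le_rfl
    · intro p hJp ih
      have hr0 : (0:ℝ) ≤ D p / D (p + 1) := div_nonneg (hD p).le (hD (p + 1)).le
      have hr1 : (1:ℝ) ≤ D p / D (p + 1) := by
        rw [le_div_iff₀ (hD (p + 1))]; simpa using hDmono (Nat.le_succ p)
      have ha : E A B D J * D J / D p * (D p / D (p + 1)) = E A B D J * D J / D (p + 1) := by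
        rw [div_mul_div_comm, mul_comm (D p) (D (p + 1)), mul_div_mul_right _ _ (hD p).ne']
      have hccp : M' ≤ cc A B D (p + 1) :=
        le_trans hJ (cc_mono A B D hA hAsum hD hDmono (by omega))
      have step1 : min (E A B D J * D J / D (p + 1)) M' ≤ E A B D p * D p / D (p + 1) := by
        calc min (E A B D J * D J / D (p + 1)) M'
            ≤ min (E A B D J * D J / D p * (D p / D (p + 1))) (M' * (D p / D (p + 1))) := by
              rw [ha]
              exact min_le_min le_rfl (le_mul_of_one_le_right hM'0.le hr1)
          _ = min (E A B D J * D J / D p) M' * (D p / D (p + 1)) := (min_mul_of_nonneg _ _ hr0).symm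
          _ ≤ E A B D p * (D p / D (p + 1)) := mul_le_mul_of_nonneg_right ih hr0
          _ = E A B D p * D p / D (p + 1) := by rw [mul_div_assoc]
      have key : E A B D (p + 1) = min (E A B D p * D p / D (p + 1)) (cc A B D (p + 1)) := by
        by_cases h : Cond A B p (sig A B D p)
        · rw [(sig_pos A B D h).1, (sig_pos A B D h).2.1]
        · rw [(sig_neg A B D h).1, (sig_neg A B D h).2.1]
      rw [key]
      exact le_min step1 (le_trans (min_le_right _ _) hccp)
  -- now conclude
  have hε : (0:ℝ) < E A B D J * D J / M' := div_pos (mul_pos hEJ (hD J)) hM'0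
  have hD2 : ∀ᶠ p in atTop, D p < E A B D J * D J / M' :=
    hDlim.eventually (eventually_lt_nhds hε)
  filter_upwards [hD2, eventually_ge_atTop J] with p hDp hJp
  have hMa : M' ≤ E A B D J * D J / D p := by
    rw [le_div_iff₀ (hD p)]
    have := (lt_div_iff₀ hM'0).mp hDp
    nlinarith
  have := low p hJp
  rw [min_eq_right hMa] at this
  exact le_trans (le_max_left M 1) this


lemma EB_tendsto (hA : ∀ p, 0 ≤ A p) (hAsum : Summable A)
    (hB : ∀ p, 0 < B p) (hBlim : Tendsto B atTop (nhds 0))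
    (hD : ∀ p, 0 < D p) (hDmono : Antitone D) (hDlim : Tendsto D atTop (nhds 0)) :
    Tendsto (fun p => E A B D p * B p) atTop (nhds 0) := by
  rw [Metric.tendsto_atTop]
  intro ε hε
  obtain ⟨j0, hj0⟩ := cc_unbdd A B D hA hAsum hB hBlim hD hDmono hDlim (max 2 (ε⁻¹ + 1))
  refine ⟨j0, fun i hi => ?_⟩
  have hci : max 2 (ε⁻¹ + 1) ≤ cc A B D i :=
    le_trans hj0 (cc_mono A B D hA hAsum hD hDmono hi)
  have hci2 : (2:ℝ) ≤ cc A B D i := le_trans (le_max_left _ _) hci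
  have hciε : ε⁻¹ + 1 ≤ cc A B D i := le_trans (le_max_right _ _) hci
  have hci0 : (0:ℝ) < cc A B D i := by linarith
  have hBi : B i ≤ ((cc A B D i) ^ 2)⁻¹ := by
    rcases Binv A B D i with h | h
    · linarith
    · exact h i le_rfl
  have hEB : E A B D i * B i ≤ (cc A B D i)⁻¹ := by
    have hEi : E A B D i ≤ cc A B D i := (inv A B D hA hAsum hD hDmono i).2.2.1
    have h0 : 0 < E A B D i := (inv A B D hA hAsum hD hDmono i).1
    calc E A B D i * B i ≤ cc A B D i * ((cc A B D i) ^ 2)⁻¹ := by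
          apply mul_le_mul hEi hBi (hB i).le hci0.le
      _ = (cc A B D i)⁻¹ := by
          field_simp
  have hlt : (cc A B D i)⁻¹ < ε := by
    have hεinv : (0:ℝ) < ε⁻¹ := inv_pos.2 hε
    have : ε⁻¹ < cc A B D i := by linarith
    calc (cc A B D i)⁻¹ < (ε⁻¹)⁻¹ := by
          apply inv_strictAnti₀ hεinv this
      _ = ε := inv_inv ε
  have hpos : 0 ≤ E A B D i * B i :=
    mul_nonneg (inv A B D hA hAsum hD hDmono i).1.le (hB i).le
  rw [Real.dist_eq, sub_zero, abs_of_nonneg hpos]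
  linarith

/-- jump predicate -/
def Jmp : ℕ → Prop
  | 0 => False
  | p + 1 => Cond A B p (sig A B D p)

def tau (q : ℕ) : ℝ :=
  if h : ∃ m, q < m ∧ Jmp A B D m then tail A (Nat.find h) else 0

lemma tau_nonneg (hA : ∀ p, 0 ≤ A p) (q : ℕ) : 0 ≤ tau A B D q := by
  rw [tau]
  split
  · exact tail_nonneg A hA _
  · exact le_refl 0

lemma tau_le (hA : ∀ p, 0 ≤ A p) (hAsum : Summable A) (q : ℕ) :
    tau A B D q ≤ tail A (q + 1) := by
  rw [tau]
  split
  · next h =>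
    exact tail_anti A hA hAsum (Nat.find_spec h).1
  · exact tail_nonneg A hA _

lemma jmp_succ (p : ℕ) : Jmp A B D (p + 1) ↔ Cond A B p (sig A B D p) := Iff.rfl

lemma tau_eq_of_not {q : ℕ} (h : ¬ Jmp A B D (q + 1)) :
    tau A B D (q + 1) = tau A B D q := by
  rw [tau, tau]
  by_cases h1 : ∃ m, q + 1 < m ∧ Jmp A B D m
  · have h2 : ∃ m, q < m ∧ Jmp A B D m := by
      obtain ⟨m, hm1, hm2⟩ := h1
      exact ⟨m, by omega, hm2⟩
    rw [dif_pos h1, dif_pos h2]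
    congr 1
    apply le_antisymm
    · apply Nat.find_le
      obtain ⟨hm1, hm2⟩ := Nat.find_spec h2
      have : Nat.find h2 ≠ q + 1 := by
        intro he
        exact h (he ▸ hm2)
      exact ⟨by omega, hm2⟩
    · apply Nat.find_le
      obtain ⟨hm1, hm2⟩ := Nat.find_spec h1
      exact ⟨by omega, hm2⟩
  · have h2 : ¬ ∃ m, q < m ∧ Jmp A B D m := by
      intro ⟨m, hm1, hm2⟩
      by_cases he : m = q + 1
      · exact h (he ▸ hm2)
      · exact h1 ⟨m, by omega, hm2⟩
    rw [dif_neg h1, dif_neg h2]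

lemma tau_eq_of_jmp {q : ℕ} (h : Jmp A B D (q + 1)) :
    tau A B D q = tail A (q + 1) := by
  have h2 : ∃ m, q < m ∧ Jmp A B D m := ⟨q + 1, by omega, h⟩
  rw [tau, dif_pos h2]
  congr 1
  have h3 : Nat.find h2 ≤ q + 1 := Nat.find_le ⟨by omega, h⟩
  have h4 : q < Nat.find h2 := (Nat.find_spec h2).1
  omega

lemma tau_succ_le_of_jmp (hA : ∀ p, 0 ≤ A p) {q : ℕ} (h : Jmp A B D (q + 1)) :
    tau A B D (q + 1) ≤ tail A (q + 1) / 8 := by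
  rw [tau]
  split
  · next h1 =>
    obtain ⟨hm1, hm2⟩ := Nat.find_spec h1
    obtain ⟨p0, hp0⟩ : ∃ p0, Nat.find h1 = p0 + 1 := ⟨Nat.find h1 - 1, by omega⟩
    rw [hp0] at hm1 hm2 ⊢
    have hcond : Cond A B p0 (sig A B D p0) := hm2
    have hq1p0 : q + 1 ≤ p0 := by omega
    -- S is constant on (q+1, p0]
    have hnoj : ∀ m, q + 1 ≤ m → m < p0 → ¬ Cond A B m (sig A B D m) := by
      intro m hm hmp0
      have hlt : m + 1 < Nat.find h1 := by omega
      have := Nat.find_min h1 hlt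
      intro hc
      exact this ⟨by omega, hc⟩
    have hS : S A B D p0 = S A B D (q + 1) :=
      (noj_ccS A B D (q + 1) p0 hq1p0 hnoj).2
    have hSq : S A B D (q + 1) = tail A (q + 1) := (sig_pos A B D h).2.2
    have h5 : tail A (p0 + 1) ≤ S A B D p0 / 8 := hcond.2.2
    rw [hS, hSq] at h5
    exact h5
  · have := tail_nonneg A hA (q + 1)
    linarith

lemma sum_bound (hA : ∀ p, 0 ≤ A p) (hAsum : Summable A)
    (hD : ∀ p, 0 < D p) (hDmono : Antitone D) :
    ∀ N q, ∑ p ∈ Finset.range N, cc A B D (q + p) * A (q + p) ≤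
      cc A B D q * tail A q + (8 / 3) * (cc A B D q * tau A B D q) := by
  intro N
  induction N with
  | zero =>
    intro q
    simp only [Finset.range_zero, Finset.sum_empty]
    have h1 : (0:ℝ) < cc A B D q := by
      have := (inv A B D hA hAsum hD hDmono q).2.2.2.1; linarith
    have h2 := tail_nonneg A hA q
    have h3 := tau_nonneg A B D hA q
    have := mul_nonneg h1.le h2
    have := mul_nonneg h1.le h3
    linarith
  | succ N ih =>
    intro q
    have hsplit : ∑ p ∈ Finset.range (N + 1), cc A B D (q + p) * A (q + p) =
        (∑ p ∈ Finset.range N, cc A B D ((q + 1) + p) * A ((q + 1) + p)) +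
          cc A B D q * A q := by
      rw [Finset.sum_range_succ']
      congr 1
      · apply Finset.sum_congr rfl
        intro i _
        rw [show q + (i + 1) = (q + 1) + i from by omega]
    rw [hsplit]
    have hIH := ih (q + 1)
    have hc0 : (0:ℝ) < cc A B D q := by
      have := (inv A B D hA hAsum hD hDmono q).2.2.2.1; linarith
    have htq := tail_succ A hAsum q
    have hT' := tail_nonneg A hA (q + 1)
    by_cases h : Cond A B q (sig A B D q)
    · have hj : Jmp A B D (q + 1) := h
      have hcs : cc A B D (q + 1) = 2 * cc A B D q := (sig_pos A B D h).2.1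
      have htau : tau A B D q = tail A (q + 1) := tau_eq_of_jmp A B D hj
      have htau' : tau A B D (q + 1) ≤ tail A (q + 1) / 8 := tau_succ_le_of_jmp A B D hA hj
      have hkey : cc A B D q * tau A B D (q + 1) ≤ cc A B D q * (tail A (q + 1) / 8) :=
        mul_le_mul_of_nonneg_left htau' hc0.le
      rw [hcs] at hIH
      rw [htau, htq]
      nlinarith [hIH]
    · have hj : ¬ Jmp A B D (q + 1) := h
      have hcs : cc A B D (q + 1) = cc A B D q := (sig_neg A B D h).2.1
      have htau : tau A B D (q + 1) = tau A B D q := tau_eq_of_not A B D hj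
      rw [hcs, htau] at hIH
      rw [htq]
      nlinarith [hIH]
end CC16

end

open Filter

/-- Chaumat–Chollet Lemma 16. -/
theorem chaumat_chollet_lemma16 (A B D : ℕ → ℝ)
    (hA : ∀ p, 0 ≤ A p) (hAsum : Summable A)
    (hB : ∀ p, 0 < B p) (hBlim : Tendsto B atTop (nhds 0))
    (hD : ∀ p, 0 < D p) (hDmono : Antitone D) (hDlim : Tendsto D atTop (nhds 0)) :
    ∃ E : ℕ → ℝ, (∀ p, 0 < E p) ∧ Monotone E ∧
      Tendsto E atTop atTop ∧
      (∀ q : ℕ, Summable (fun p : ℕ => E (q + p) * A (q + p)) ∧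
        (∑' p : ℕ, E (q + p) * A (q + p)) ≤ 8 * E q * ∑' p : ℕ, A (q + p)) ∧
      Antitone (fun p : ℕ => E p * D p) ∧
      Tendsto (fun p : ℕ => E p * B p) atTop (nhds 0) := by
  refine ⟨CC16.E A B D, fun p => (CC16.inv A B D hA hAsum hD hDmono p).1,
    CC16.E_mono A B D hA hAsum hD hDmono,
    CC16.E_tendsto A B D hA hAsum hB hBlim hD hDmono hDlim, ?_,
    CC16.ED_anti A B D hA hAsum hD hDmono,
    CC16.EB_tendsto A B D hA hAsum hB hBlim hD hDmono hDlim⟩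
  intro q
  have hnn : ∀ p, 0 ≤ CC16.E A B D (q + p) * A (q + p) :=
    fun p => mul_nonneg (CC16.inv A B D hA hAsum hD hDmono (q + p)).1.le (hA _)
  have hbd : ∀ n, ∑ p ∈ Finset.range n, CC16.E A B D (q + p) * A (q + p) ≤
      CC16.cc A B D q * CC16.tail A q + (8 / 3) * (CC16.cc A B D q * CC16.tau A B D q) := by
    intro n
    refine le_trans ?_ (CC16.sum_bound A B D hA hAsum hD hDmono n q)
    apply Finset.sum_le_sum
    intro i _
    exact mul_le_mul_of_nonneg_right
      (CC16.inv A B D hA hAsum hD hDmono (q + i)).2.2.1 (hA _)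
  refine ⟨summable_of_sum_range_le hnn hbd, ?_⟩
  have h1 := Summable.tsum_le_of_sum_range_le (summable_of_sum_range_le hnn hbd) hbd
  have htail : (∑' p : ℕ, A (q + p)) = CC16.tail A q := rfl
  rw [htail]
  obtain ⟨hEq, hcEq, hEcq, hcq, _⟩ := CC16.inv A B D hA hAsum hD hDmono q
  have hT := CC16.tail_nonneg A hA q
  have htau1 : CC16.tau A B D q ≤ CC16.tail A (q + 1) := CC16.tau_le A B D hA hAsum q
  have htau2 : CC16.tail A (q + 1) ≤ CC16.tail A q := CC16.tail_succ_le A hA hAsum q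
  have hc0 : (0:ℝ) < CC16.cc A B D q := by linarith
  have k1 : CC16.cc A B D q * CC16.tail A q ≤ 2 * CC16.E A B D q * CC16.tail A q := by
    apply mul_le_mul_of_nonneg_right (by linarith) hT
  have k2 : CC16.cc A B D q * CC16.tau A B D q ≤ CC16.cc A B D q * CC16.tail A q :=
    mul_le_mul_of_nonneg_left (by linarith) hc0.le
  have k3 : 0 ≤ CC16.E A B D q * CC16.tail A q := mul_nonneg hEq.le hT
  nlinarith [h1, k1, k2, k3]
end
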